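/- arXiv:2201.11783 — 5 statements merged into one kernel-verified Lean document; each statement's English description precedes it below -/
import Mathlib

section
/- Let X and Z be nonempty finite types and let p : X × Z → ℝ be a joint pmf (p(x,z) ≥ 0 for all (x,z) and ∑_{(x,z)} p(x,z) = 1), with X-marginal pX(x) = ∑_z p(x,z). Let q : X → Z → ℝ be such that for every x, q(·|x) is a pmf on Z, and assume q(z|x) > 0 whenever p(x,z) > 0. Then the Shannon entropy of the marginal satisfies the variational lower bound H(pX) ≥ ∑_{(x,z) : p(x,z) > 0} p(x,z) * log( q(z|x) / p(x,z) ). -/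
open Finset Real

/-- Agakov variational lower bound on the marginal entropy. -/
theorem marginal_entropy_variational_lower_bound
    {X Z : Type*} [Fintype X] [Fintype Z] [Nonempty X] [Nonempty Z]
    (p : X × Z → ℝ)
    (hp_nonneg : ∀ xz, 0 ≤ p xz)
    (hp_sum : ∑ xz : X × Z, p xz = 1)
    (pX : X → ℝ) (hpX : ∀ x, pX x = ∑ z : Z, p (x, z))
    (q : X → Z → ℝ)
    (hq_nonneg : ∀ x z, 0 ≤ q x z)
    (hq_sum : ∀ x, ∑ z : Z, q x z = 1)
    (hq_pos : ∀ x z, 0 < p (x, z) → 0 < q x z) :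
    (-∑ x ∈ Finset.univ.filter (fun x => 0 < pX x), pX x * Real.log (pX x)) ≥
      ∑ xz ∈ Finset.univ.filter (fun xz : X × Z => 0 < p xz),
        p xz * Real.log (q xz.1 xz.2 / p xz) := by
  classical
  set S := Finset.univ.filter (fun xz : X × Z => 0 < p xz) with hS
  have hpX_nonneg : ∀ x, 0 ≤ pX x := fun x => by
    rw [hpX]; exact Finset.sum_nonneg fun z _ => hp_nonneg _
  have hpX_pos : ∀ xz : X × Z, 0 < p xz → 0 < pX xz.1 := by
    intro xz h
    calc (0:ℝ) < p xz := h
      _ = p (xz.1, xz.2) := by rw [Prod.mk.eta]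
      _ ≤ pX xz.1 := by
        rw [hpX]
        exact Finset.single_le_sum (fun z _ => hp_nonneg _) (Finset.mem_univ xz.2)
  -- pointwise bound
  have key : ∀ xz ∈ S, p xz * Real.log (q xz.1 xz.2 / p xz)
      ≤ (q xz.1 xz.2 * pX xz.1 - p xz) - p xz * Real.log (pX xz.1) := by
    intro xz hxz
    have hp : 0 < p xz := (Finset.mem_filter.mp hxz).2
    have hq : 0 < q xz.1 xz.2 := by
      have := hq_pos xz.1 xz.2 (by rwa [Prod.mk.eta]); exact this
    have hpx : 0 < pX xz.1 := hpX_pos _ hp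
    have ht : 0 < q xz.1 xz.2 * pX xz.1 / p xz := by positivity
    have hlog := Real.log_le_sub_one_of_pos ht
    have h1 : Real.log (q xz.1 xz.2 / p xz)
        = Real.log (q xz.1 xz.2 * pX xz.1 / p xz) - Real.log (pX xz.1) := by
      rw [Real.log_div hq.ne' hp.ne', Real.log_div (by positivity) hp.ne',
        Real.log_mul hq.ne' hpx.ne']
      ring
    rw [h1]
    have h2 := mul_le_mul_of_nonneg_left hlog hp.le
    have h3 : p xz * (q xz.1 xz.2 * pX xz.1 / p xz) = q xz.1 xz.2 * pX xz.1 := by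
      field_simp
    nlinarith [h2, h3]
  have hsum_le := Finset.sum_le_sum key
  -- sum over S of p equals 1
  have hSp : ∑ xz ∈ S, p xz = 1 := by
    rw [← hp_sum]
    refine Finset.sum_subset (Finset.filter_subset _ _) ?_
    intro xz _ hxz
    have h0 : ¬ (0 < p xz) := by simpa [hS] using hxz
    linarith [hp_nonneg xz, not_lt.mp h0]
  -- sum over S of q * pX is at most 1
  have hSq : ∑ xz ∈ S, q xz.1 xz.2 * pX xz.1 ≤ 1 := by
    have h1 : ∑ xz ∈ S, q xz.1 xz.2 * pX xz.1
        ≤ ∑ xz : X × Z, q xz.1 xz.2 * pX xz.1 := by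
      refine Finset.sum_le_sum_of_subset_of_nonneg (Finset.filter_subset _ _) ?_
      intro xz _ _
      exact mul_nonneg (hq_nonneg _ _) (hpX_nonneg _)
    have h2 : ∑ xz : X × Z, q xz.1 xz.2 * pX xz.1 = 1 := by
      rw [Fintype.sum_prod_type]
      have : ∀ x : X, ∑ z : Z, q x z * pX x = pX x := by
        intro x
        rw [← Finset.sum_mul, hq_sum, one_mul]
      simp_rw [this]
      simp_rw [hpX]
      rw [← Fintype.sum_prod_type, hp_sum]
    linarith
  -- sum over S of p * log pX equals full sum over pX > 0
  have hSlog : ∑ xz ∈ S, p xz * Real.log (pX xz.1)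
      = ∑ x ∈ Finset.univ.filter (fun x => 0 < pX x), pX x * Real.log (pX x) := by
    have h1 : ∑ xz ∈ S, p xz * Real.log (pX xz.1)
        = ∑ xz : X × Z, p xz * Real.log (pX xz.1) := by
      refine Finset.sum_subset (Finset.filter_subset _ _) ?_
      intro xz _ hxz
      have h0 : ¬ (0 < p xz) := by simpa [hS] using hxz
      have : p xz = 0 := le_antisymm (not_lt.mp h0) (hp_nonneg xz)
      simp [this]
    have h2 : ∑ xz : X × Z, p xz * Real.log (pX xz.1)
        = ∑ x : X, pX x * Real.log (pX x) := by
      rw [Fintype.sum_prod_type]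
      refine Finset.sum_congr rfl ?_
      intro x _
      dsimp only
      rw [← Finset.sum_mul, ← hpX]
    have h3 : ∑ x : X, pX x * Real.log (pX x)
        = ∑ x ∈ Finset.univ.filter (fun x => 0 < pX x), pX x * Real.log (pX x) := by
      symm
      refine Finset.sum_subset (Finset.filter_subset _ _) ?_
      intro x _ hx
      have h0 : ¬ (0 < pX x) := by simpa using hx
      have : pX x = 0 := le_antisymm (not_lt.mp h0) (hpX_nonneg x)
      simp [this]
    rw [h1, h2, h3]
  have hsplit : ∑ xz ∈ S, ((q xz.1 xz.2 * pX xz.1 - p xz) - p xz * Real.log (pX xz.1))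
      = (∑ xz ∈ S, q xz.1 xz.2 * pX xz.1) - (∑ xz ∈ S, p xz)
        - ∑ xz ∈ S, p xz * Real.log (pX xz.1) := by
    rw [Finset.sum_sub_distrib, Finset.sum_sub_distrib]
  rw [ge_iff_le]
  calc ∑ xz ∈ S, p xz * Real.log (q xz.1 xz.2 / p xz)
      ≤ ∑ xz ∈ S, ((q xz.1 xz.2 * pX xz.1 - p xz) - p xz * Real.log (pX xz.1)) := hsum_le
    _ = (∑ xz ∈ S, q xz.1 xz.2 * pX xz.1) - (∑ xz ∈ S, p xz)
        - ∑ xz ∈ S, p xz * Real.log (pX xz.1) := hsplit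
    _ ≤ -∑ x ∈ Finset.univ.filter (fun x => 0 < pX x), pX x * Real.log (pX x) := by
        rw [hSp, hSlog]; linarith
end

section
/- Let Z and A be nonempty finite types. Let pZ be a pmf on Z, and for each z ∈ Z let π(·|z) be a pmf on A. Define the mixture pmf πA on A by πA(a) = ∑_z pZ(z) * π(a|z). Let q : A → Z → ℝ be such that for every a, q(·|a) is a pmf on Z, and assume q(z|a) > 0 whenever pZ(z) * π(a|z) > 0. Then H(πA) ≥ ∑_{(z,a) : pZ(z)·π(a|z) > 0} pZ(z) * π(a|z) * log( q(z|a) ) + H(pZ) + ∑_z pZ(z) * H(π(·|z)). -/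
open Finset Real

/-- entropy lower bound for a latent-variable (mixture) policy:
`H(πA) ≥ E[log q(z|a)] + H(pZ) + E_z H(π(·|z))`. -/
theorem latent_policy_entropy_lower_bound
    {Z A : Type*} [Fintype Z] [Fintype A] [Nonempty Z] [Nonempty A]
    (pZ : Z → ℝ)
    (hpZ_nonneg : ∀ z, 0 ≤ pZ z) (hpZ_sum : ∑ z : Z, pZ z = 1)
    (pol : Z → A → ℝ)
    (hpol_nonneg : ∀ z a, 0 ≤ pol z a) (hpol_sum : ∀ z, ∑ a : A, pol z a = 1)
    (polA : A → ℝ) (hpolA : ∀ a, polA a = ∑ z : Z, pZ z * pol z a)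
    (q : A → Z → ℝ)
    (hq_nonneg : ∀ a z, 0 ≤ q a z) (hq_sum : ∀ a, ∑ z : Z, q a z = 1)
    (hq_pos : ∀ z a, 0 < pZ z * pol z a → 0 < q a z) :
    (-∑ a ∈ Finset.univ.filter (fun a => 0 < polA a), polA a * Real.log (polA a)) ≥
      (∑ za ∈ Finset.univ.filter (fun za : Z × A => 0 < pZ za.1 * pol za.1 za.2),
          pZ za.1 * pol za.1 za.2 * Real.log (q za.2 za.1))
      + (-∑ z ∈ Finset.univ.filter (fun z => 0 < pZ z), pZ z * Real.log (pZ z))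
      + ∑ z : Z, pZ z *
          (-∑ a ∈ Finset.univ.filter (fun a => 0 < pol z a), pol z a * Real.log (pol z a)) := by
  classical
  have hw_nonneg : ∀ z a, 0 ≤ pZ z * pol z a :=
    fun z a => mul_nonneg (hpZ_nonneg z) (hpol_nonneg z a)
  have hpolA_nonneg : ∀ a, 0 ≤ polA a := by
    intro a; rw [hpolA]; exact Finset.sum_nonneg fun z _ => hw_nonneg z a
  set S := Finset.univ.filter (fun za : Z × A => 0 < pZ za.1 * pol za.1 za.2) with hS
  have hw_total : ∑ za : Z × A, pZ za.1 * pol za.1 za.2 = 1 := by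
    rw [Fintype.sum_prod_type]
    simp_rw [← Finset.mul_sum, hpol_sum, mul_one]
    exact hpZ_sum
  have hpolA_total : ∑ a : A, polA a = 1 := by
    simp_rw [hpolA]
    rw [Finset.sum_comm]
    simp_rw [← Finset.mul_sum, hpol_sum, mul_one]
    exact hpZ_sum
  -- restricting a w-weighted sum to S changes nothing
  have restrict : ∀ f : Z × A → ℝ, ∑ za ∈ S, (pZ za.1 * pol za.1 za.2) * f za
      = ∑ za : Z × A, (pZ za.1 * pol za.1 za.2) * f za := by
    intro f
    apply Finset.sum_subset (Finset.filter_subset _ _)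
    intro za _ hza
    have h0 : pZ za.1 * pol za.1 za.2 = 0 :=
      le_antisymm (not_lt.mp (by simpa [hS] using hza)) (hw_nonneg za.1 za.2)
    simp [h0]
  have hS_w : ∑ za ∈ S, pZ za.1 * pol za.1 za.2 = 1 := by
    have := restrict (fun _ => 1)
    simpa [hw_total] using this
  -- step 1: entropy of polA as a w-weighted sum
  have h1 : ∑ a ∈ Finset.univ.filter (fun a => 0 < polA a), polA a * Real.log (polA a)
      = ∑ za : Z × A, (pZ za.1 * pol za.1 za.2) * Real.log (polA za.2) := by
    rw [Fintype.sum_prod_type_right]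
    have key : ∀ a : A, ∑ z : Z, (pZ z * pol z a) * Real.log (polA a)
        = polA a * Real.log (polA a) := by
      intro a; rw [← Finset.sum_mul, ← hpolA a]
    simp_rw [key]
    apply Finset.sum_subset (Finset.filter_subset _ _)
    intro a _ ha
    have h0 : polA a = 0 := le_antisymm (not_lt.mp (by simpa using ha)) (hpolA_nonneg a)
    simp [h0]
  -- step 2: entropy of pZ as a w-weighted sum
  have h2 : ∑ z ∈ Finset.univ.filter (fun z => 0 < pZ z), pZ z * Real.log (pZ z)
      = ∑ za : Z × A, (pZ za.1 * pol za.1 za.2) * Real.log (pZ za.1) := by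
    rw [Fintype.sum_prod_type]
    have key : ∀ z : Z, ∑ a : A, (pZ z * pol z a) * Real.log (pZ z)
        = pZ z * Real.log (pZ z) := by
      intro z
      rw [← Finset.sum_mul, ← Finset.mul_sum, hpol_sum, mul_one]
    simp_rw [key]
    apply Finset.sum_subset (Finset.filter_subset _ _)
    intro z _ hz
    have h0 : pZ z = 0 := le_antisymm (not_lt.mp (by simpa using hz)) (hpZ_nonneg z)
    simp [h0]
  -- step 3: expected conditional entropy as a w-weighted sum
  have h3 : ∑ z : Z, pZ z * (∑ a ∈ Finset.univ.filter (fun a => 0 < pol z a),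
        pol z a * Real.log (pol z a))
      = ∑ za : Z × A, (pZ za.1 * pol za.1 za.2) * Real.log (pol za.1 za.2) := by
    rw [Fintype.sum_prod_type]
    apply Finset.sum_congr rfl
    intro z _
    rw [Finset.mul_sum]
    simp_rw [← mul_assoc]
    apply Finset.sum_subset (Finset.filter_subset _ _)
    intro a _ ha
    have h0 : pol z a = 0 := le_antisymm (not_lt.mp (by simpa using ha)) (hpol_nonneg z a)
    simp [h0]
  -- bound on the q·polA mass over S
  have hq_polA : ∑ za ∈ S, q za.2 za.1 * polA za.2 ≤ 1 := by
    calc ∑ za ∈ S, q za.2 za.1 * polA za.2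
        ≤ ∑ za : Z × A, q za.2 za.1 * polA za.2 :=
          Finset.sum_le_sum_of_subset_of_nonneg (Finset.filter_subset _ _)
            (fun za _ _ => mul_nonneg (hq_nonneg _ _) (hpolA_nonneg _))
      _ = 1 := by
          rw [Fintype.sum_prod_type_right]
          simp_rw [← Finset.sum_mul, hq_sum, one_mul]
          exact hpolA_total
  -- key pointwise + summed inequality
  have key : ∑ za ∈ S, (pZ za.1 * pol za.1 za.2) *
      (Real.log (q za.2 za.1) + Real.log (polA za.2)
        - Real.log (pZ za.1) - Real.log (pol za.1 za.2)) ≤ 0 := by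
    have hub : ∀ za ∈ S, (pZ za.1 * pol za.1 za.2) *
        (Real.log (q za.2 za.1) + Real.log (polA za.2)
          - Real.log (pZ za.1) - Real.log (pol za.1 za.2))
        ≤ q za.2 za.1 * polA za.2 - pZ za.1 * pol za.1 za.2 := by
      intro za hza
      have hw : 0 < pZ za.1 * pol za.1 za.2 := by simpa [hS] using hza
      have hpZpos : 0 < pZ za.1 := (mul_pos_iff.mp hw).elim (fun h => h.1)
        (fun h => absurd h.1 (not_lt.mpr (hpZ_nonneg _)))
      have hpolpos : 0 < pol za.1 za.2 := (mul_pos_iff.mp hw).elim (fun h => h.2)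
        (fun h => absurd h.1 (not_lt.mpr (hpZ_nonneg _)))
      have hqpos : 0 < q za.2 za.1 := hq_pos _ _ hw
      have hpolApos : 0 < polA za.2 := by
        rw [hpolA]
        exact lt_of_lt_of_le hw (Finset.single_le_sum (fun z _ => hw_nonneg z za.2)
          (Finset.mem_univ za.1))
      have hratio : 0 < q za.2 za.1 * polA za.2 / (pZ za.1 * pol za.1 za.2) :=
        div_pos (mul_pos hqpos hpolApos) hw
      have hlog : Real.log (q za.2 za.1) + Real.log (polA za.2)
          - Real.log (pZ za.1) - Real.log (pol za.1 za.2)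
          = Real.log (q za.2 za.1 * polA za.2 / (pZ za.1 * pol za.1 za.2)) := by
        rw [Real.log_div (by positivity) (by positivity),
          Real.log_mul (ne_of_gt hqpos) (ne_of_gt hpolApos),
          Real.log_mul (ne_of_gt hpZpos) (ne_of_gt hpolpos)]
        ring
      rw [hlog]
      have hle := Real.log_le_sub_one_of_pos hratio
      have := mul_le_mul_of_nonneg_left hle (le_of_lt hw)
      calc (pZ za.1 * pol za.1 za.2) * Real.log (q za.2 za.1 * polA za.2 / (pZ za.1 * pol za.1 za.2))
          ≤ (pZ za.1 * pol za.1 za.2) * (q za.2 za.1 * polA za.2 / (pZ za.1 * pol za.1 za.2) - 1) := this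
        _ = q za.2 za.1 * polA za.2 - pZ za.1 * pol za.1 za.2 := by
            field_simp
    calc ∑ za ∈ S, (pZ za.1 * pol za.1 za.2) *
        (Real.log (q za.2 za.1) + Real.log (polA za.2)
          - Real.log (pZ za.1) - Real.log (pol za.1 za.2))
        ≤ ∑ za ∈ S, (q za.2 za.1 * polA za.2 - pZ za.1 * pol za.1 za.2) :=
          Finset.sum_le_sum hub
      _ = (∑ za ∈ S, q za.2 za.1 * polA za.2) - 1 := by
          rw [Finset.sum_sub_distrib, hS_w]
      _ ≤ 0 := by linarith
  -- assemble
  have expand : ∑ za ∈ S, (pZ za.1 * pol za.1 za.2) *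
      (Real.log (q za.2 za.1) + Real.log (polA za.2)
        - Real.log (pZ za.1) - Real.log (pol za.1 za.2))
      = (∑ za ∈ S, (pZ za.1 * pol za.1 za.2) * Real.log (q za.2 za.1))
        + (∑ za ∈ S, (pZ za.1 * pol za.1 za.2) * Real.log (polA za.2))
        - (∑ za ∈ S, (pZ za.1 * pol za.1 za.2) * Real.log (pZ za.1))
        - (∑ za ∈ S, (pZ za.1 * pol za.1 za.2) * Real.log (pol za.1 za.2)) := by
    rw [← Finset.sum_add_distrib, ← Finset.sum_sub_distrib, ← Finset.sum_sub_distrib]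
    apply Finset.sum_congr rfl
    intro za _
    ring
  rw [expand] at key
  have e1 := restrict (fun za => Real.log (polA za.2))
  have e2 := restrict (fun za => Real.log (pZ za.1))
  have e3 := restrict (fun za => Real.log (pol za.1 za.2))
  rw [h1, ← e1]
  simp_rw [mul_neg, Finset.sum_neg_distrib] at *
  rw [h2, ← e2, h3, ← e3] at *
  linarith [key]
end

section
/- Let X and Z be nonempty finite types and let p : X × Z → ℝ be a joint pmf with X-marginal pX(x) = ∑_z p(x,z) and conditional distributions p(z|x) = p(x,z)/pX(x) for x with pX(x) > 0. Let q : X → Z → ℝ be such that for every x, q(·|x) is a pmf on Z with q(z|x) > 0 whenever p(x,z) > 0. Then the gap in the variational lower bound equals an expected Kullback–Leibler divergence: H(pX) − ∑_{(x,z) : p(x,z) > 0} p(x,z) * log( q(z|x) / p(x,z) ) = ∑_{x : pX(x) > 0} pX(x) * KL( p(·|x) ‖ q(·|x) ). In particular the gap is nonnegative, and the bound is an equality when q(z|x) = p(z|x) for all x with pX(x) > 0. -/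
open Finset Real

/-- the gap in the Agakov variational lower bound on the marginal
entropy equals an expected Kullback–Leibler divergence; in particular the gap
is nonnegative, and the bound is an equality at the true posterior. -/
theorem marginal_entropy_variational_gap_eq_KL
    {X Z : Type*} [Fintype X] [Fintype Z] [Nonempty X] [Nonempty Z]
    (p : X × Z → ℝ)
    (hp_nonneg : ∀ xz, 0 ≤ p xz)
    (hp_sum : ∑ xz : X × Z, p xz = 1)
    (pX : X → ℝ) (hpX : ∀ x, pX x = ∑ z : Z, p (x, z))
    (pcond : X → Z → ℝ)
    (hpcond : ∀ x, 0 < pX x → ∀ z, pcond x z = p (x, z) / pX x)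
    (q : X → Z → ℝ)
    (hq_nonneg : ∀ x z, 0 ≤ q x z)
    (hq_sum : ∀ x, ∑ z : Z, q x z = 1)
    (hq_pos : ∀ x z, 0 < p (x, z) → 0 < q x z) :
    ((-∑ x ∈ Finset.univ.filter (fun x => 0 < pX x), pX x * Real.log (pX x))
        - ∑ xz ∈ Finset.univ.filter (fun xz : X × Z => 0 < p xz),
            p xz * Real.log (q xz.1 xz.2 / p xz)
      = ∑ x ∈ Finset.univ.filter (fun x => 0 < pX x),
          pX x * ∑ z ∈ Finset.univ.filter (fun z => 0 < pcond x z),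
            pcond x z * Real.log (pcond x z / q x z))
    ∧ (0 ≤ (-∑ x ∈ Finset.univ.filter (fun x => 0 < pX x), pX x * Real.log (pX x))
        - ∑ xz ∈ Finset.univ.filter (fun xz : X × Z => 0 < p xz),
            p xz * Real.log (q xz.1 xz.2 / p xz))
    ∧ ((∀ x, 0 < pX x → ∀ z, q x z = pcond x z) →
        (-∑ x ∈ Finset.univ.filter (fun x => 0 < pX x), pX x * Real.log (pX x))
          = ∑ xz ∈ Finset.univ.filter (fun xz : X × Z => 0 < p xz),
              p xz * Real.log (q xz.1 xz.2 / p xz)) := by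
  have hpX_nonneg : ∀ x, 0 ≤ pX x := fun x => by
    rw [hpX]; exact Finset.sum_nonneg fun z _ => hp_nonneg _
  have hpXpos : ∀ x z, 0 < p (x, z) → 0 < pX x := fun x z h => by
    rw [hpX]
    exact lt_of_lt_of_le h (Finset.single_le_sum (fun z _ => hp_nonneg (x, z))
      (Finset.mem_univ z))
  -- split joint filtered sums into iterated sums
  have hsplit : ∀ f : X × Z → ℝ,
      ∑ xz ∈ Finset.univ.filter (fun xz : X × Z => 0 < p xz), f xz
      = ∑ x : X, ∑ z ∈ Finset.univ.filter (fun z => 0 < p (x, z)), f (x, z) := by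
    intro f
    rw [Finset.sum_filter, Fintype.sum_prod_type]
    exact Finset.sum_congr rfl fun x _ => (Finset.sum_filter _ _).symm
  have hinner_sum : ∀ x, ∑ z ∈ Finset.univ.filter (fun z => 0 < p (x, z)), p (x, z) = pX x := by
    intro x
    rw [hpX]
    apply Finset.sum_filter_of_ne
    intro z _ hz
    exact lt_of_le_of_ne (hp_nonneg _) (Ne.symm hz)
  -- for x with pX x > 0, the pcond filter equals the p filter
  have hfiltereq : ∀ x, 0 < pX x →
      Finset.univ.filter (fun z => 0 < pcond x z)
        = Finset.univ.filter (fun z => 0 < p (x, z)) := by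
    intro x hx
    apply Finset.filter_congr
    intro z _
    rw [hpcond x hx z]
    constructor
    · intro h
      by_contra hc
      have : p (x, z) = 0 := le_antisymm (not_lt.mp hc) (hp_nonneg _)
      rw [this] at h; simp at h
    · intro h; positivity
  -- KL nonnegativity for each x with pX x > 0
  have hKL : ∀ x, 0 < pX x →
      0 ≤ ∑ z ∈ Finset.univ.filter (fun z => 0 < pcond x z),
            pcond x z * Real.log (pcond x z / q x z) := by
    intro x hx
    have hsum1 : ∑ z ∈ Finset.univ.filter (fun z => 0 < pcond x z), pcond x z = 1 := by
      rw [hfiltereq x hx]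
      rw [Finset.sum_congr rfl (fun z _ => hpcond x hx z)]
      rw [← Finset.sum_div, hinner_sum, div_self (ne_of_gt hx)]
    have hqle : ∑ z ∈ Finset.univ.filter (fun z => 0 < pcond x z), q x z ≤ 1 := by
      rw [← hq_sum x]
      exact Finset.sum_le_sum_of_subset_of_nonneg (Finset.filter_subset _ _)
        (fun z _ _ => hq_nonneg x z)
    have hterm : ∀ z ∈ Finset.univ.filter (fun z => 0 < pcond x z),
        pcond x z - q x z ≤ pcond x z * Real.log (pcond x z / q x z) := by
      intro z hz
      rw [Finset.mem_filter] at hz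
      have hpc : 0 < pcond x z := hz.2
      have hppos : 0 < p (x, z) := by
        have := hfiltereq x hx
        have hz' : z ∈ Finset.univ.filter (fun z => 0 < p (x, z)) := by
          rw [← this]; exact Finset.mem_filter.mpr ⟨Finset.mem_univ z, hpc⟩
        exact (Finset.mem_filter.mp hz').2
      have hq' : 0 < q x z := hq_pos x z hppos
      have hlog : Real.log (q x z / pcond x z) ≤ q x z / pcond x z - 1 :=
        Real.log_le_sub_one_of_pos (by positivity)
      have h2 : 1 - q x z / pcond x z ≤ Real.log (pcond x z / q x z) := by
        rw [Real.log_div (ne_of_gt hpc) (ne_of_gt hq')]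
        rw [Real.log_div (ne_of_gt hq') (ne_of_gt hpc)] at hlog
        linarith
      have := mul_le_mul_of_nonneg_left h2 (le_of_lt hpc)
      calc pcond x z - q x z = pcond x z * (1 - q x z / pcond x z) := by
            field_simp
        _ ≤ pcond x z * Real.log (pcond x z / q x z) := this
    calc (0:ℝ) = 1 - 1 := by ring
      _ ≤ (∑ z ∈ Finset.univ.filter (fun z => 0 < pcond x z), pcond x z)
            - ∑ z ∈ Finset.univ.filter (fun z => 0 < pcond x z), q x z := by
          rw [hsum1]; linarith
      _ = ∑ z ∈ Finset.univ.filter (fun z => 0 < pcond x z), (pcond x z - q x z) := by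
          rw [Finset.sum_sub_distrib]
      _ ≤ _ := Finset.sum_le_sum hterm
  -- the main identity
  have main : (-∑ x ∈ Finset.univ.filter (fun x => 0 < pX x), pX x * Real.log (pX x))
        - ∑ xz ∈ Finset.univ.filter (fun xz : X × Z => 0 < p xz),
            p xz * Real.log (q xz.1 xz.2 / p xz)
      = ∑ x ∈ Finset.univ.filter (fun x => 0 < pX x),
          pX x * ∑ z ∈ Finset.univ.filter (fun z => 0 < pcond x z),
            pcond x z * Real.log (pcond x z / q x z) := by
    rw [hsplit]
    have houter : ∑ x : X, ∑ z ∈ Finset.univ.filter (fun z => 0 < p (x, z)),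
          p (x, z) * Real.log (q x z / p (x, z))
        = ∑ x ∈ Finset.univ.filter (fun x => 0 < pX x),
            ∑ z ∈ Finset.univ.filter (fun z => 0 < p (x, z)),
              p (x, z) * Real.log (q x z / p (x, z)) := by
      symm
      apply Finset.sum_filter_of_ne
      intro x _ hne
      by_contra hc
      apply hne
      have hempty : Finset.univ.filter (fun z => 0 < p (x, z)) = ∅ := by
        apply Finset.filter_false_of_mem
        intro z _
        intro hpz
        exact hc (hpXpos x z hpz)
      rw [hempty, Finset.sum_empty]
    rw [houter, ← Finset.sum_neg_distrib, ← Finset.sum_sub_distrib]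
    apply Finset.sum_congr rfl
    intro x hx
    rw [Finset.mem_filter] at hx
    have hxpos := hx.2
    rw [hfiltereq x hxpos, Finset.mul_sum]
    have hrw : -(pX x * Real.log (pX x))
        = ∑ z ∈ Finset.univ.filter (fun z => 0 < p (x, z)), -(p (x, z) * Real.log (pX x)) := by
      rw [Finset.sum_neg_distrib, ← Finset.sum_mul, hinner_sum]
    rw [hrw, ← Finset.sum_sub_distrib]
    apply Finset.sum_congr rfl
    intro z hz
    rw [Finset.mem_filter] at hz
    have hpz := hz.2
    have hqz := hq_pos x z hpz
    rw [hpcond x hxpos z]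
    rw [Real.log_div (by positivity : p (x, z) / pX x ≠ 0) (ne_of_gt hqz),
        Real.log_div (ne_of_gt hpz) (ne_of_gt hxpos),
        Real.log_div (ne_of_gt hqz) (ne_of_gt hpz)]
    field_simp
    ring
  refine ⟨main, ?_, ?_⟩
  · rw [main]
    apply Finset.sum_nonneg
    intro x hx
    rw [Finset.mem_filter] at hx
    exact mul_nonneg (le_of_lt hx.2) (hKL x hx.2)
  · intro heq
    have hzero : ∑ x ∈ Finset.univ.filter (fun x => 0 < pX x),
        pX x * ∑ z ∈ Finset.univ.filter (fun z => 0 < pcond x z),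
          pcond x z * Real.log (pcond x z / q x z) = 0 := by
      apply Finset.sum_eq_zero
      intro x hx
      rw [Finset.mem_filter] at hx
      have : ∑ z ∈ Finset.univ.filter (fun z => 0 < pcond x z),
          pcond x z * Real.log (pcond x z / q x z) = 0 := by
        apply Finset.sum_eq_zero
        intro z hz
        rw [Finset.mem_filter] at hz
        rw [heq x hx.2 z, div_self (ne_of_gt hz.2), Real.log_one, mul_zero]
      rw [this, mul_zero]
    rw [hzero] at main
    linarith
end

section
/- Let X be a nonempty finite type and let p and q be pmfs on X. Then JSD(p,q) = log 2 if and only if p and q have disjoint supports, i.e., p x * q x = 0 for every x ∈ X. -/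
open Finset

/-- Jensen–Shannon divergence (natural log) between two pmfs on a finite type. -/
noncomputable def JSD {X : Type*} [Fintype X] (p q : X → ℝ) : ℝ :=
  (1 / 2) * ∑ x ∈ Finset.univ.filter (fun x => 0 < p x),
      p x * Real.log (p x / ((p x + q x) / 2))
  + (1 / 2) * ∑ x ∈ Finset.univ.filter (fun x => 0 < q x),
      q x * Real.log (q x / ((p x + q x) / 2))

lemma JSD_aux {X : Type*} [Fintype X] (p q : X → ℝ)
    (hp_nonneg : ∀ x, 0 ≤ p x) (hp_sum : ∑ x : X, p x = 1)
    (hq_nonneg : ∀ x, 0 ≤ q x) :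
    ∑ x ∈ Finset.univ.filter (fun x => 0 < p x),
        p x * Real.log (p x / ((p x + q x) / 2))
    = Real.log 2 + ∑ x ∈ Finset.univ.filter (fun x => 0 < p x),
        p x * Real.log (p x / (p x + q x)) := by
  have hsum_p : ∑ x ∈ Finset.univ.filter (fun x => 0 < p x), p x = 1 := by
    rw [← hp_sum]
    apply Finset.sum_subset (Finset.filter_subset _ _)
    intro x _ hx
    simp only [Finset.mem_filter, Finset.mem_univ, true_and, not_lt] at hx
    linarith [hp_nonneg x]
  have key : ∀ x ∈ Finset.univ.filter (fun x => 0 < p x),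
      p x * Real.log (p x / ((p x + q x) / 2))
      = p x * Real.log 2 + p x * Real.log (p x / (p x + q x)) := by
    intro x hx
    have hpx : 0 < p x := by
      simpa using (Finset.mem_filter.mp hx).2
    have hpq : 0 < p x + q x := by linarith [hq_nonneg x]
    have h1 : p x / ((p x + q x) / 2) = 2 * (p x / (p x + q x)) := by
      field_simp
    rw [h1, Real.log_mul (by norm_num) (ne_of_gt (div_pos hpx hpq)), mul_add]
  rw [Finset.sum_congr rfl key, Finset.sum_add_distrib, ← Finset.sum_mul, hsum_p, one_mul]

lemma JSD_aux_nonpos {X : Type*} [Fintype X] (p q : X → ℝ)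
    (hp_nonneg : ∀ x, 0 ≤ p x) (hq_nonneg : ∀ x, 0 ≤ q x) :
    ∀ x ∈ Finset.univ.filter (fun x => 0 < p x),
      p x * Real.log (p x / (p x + q x)) ≤ 0 := by
  intro x hx
  have hpx : 0 < p x := by simpa using (Finset.mem_filter.mp hx).2
  have hpq : 0 < p x + q x := by linarith [hq_nonneg x]
  apply mul_nonpos_of_nonneg_of_nonpos (hp_nonneg x)
  apply Real.log_nonpos (le_of_lt (div_pos hpx hpq))
  rw [div_le_one hpq]
  linarith [hq_nonneg x]

/-- the Jensen–Shannon divergence attains its maximum `log 2`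
iff the pmfs have disjoint supports. -/
theorem JSD_eq_log_two_iff_disjoint_support {X : Type*} [Fintype X] [Nonempty X]
    (p q : X → ℝ)
    (hp_nonneg : ∀ x, 0 ≤ p x) (hp_sum : ∑ x : X, p x = 1)
    (hq_nonneg : ∀ x, 0 ≤ q x) (hq_sum : ∑ x : X, q x = 1) :
    JSD p q = Real.log 2 ↔ ∀ x, p x * q x = 0 := by
  classical
  have h1 := JSD_aux p q hp_nonneg hp_sum hq_nonneg
  have h2 : ∑ x ∈ Finset.univ.filter (fun x => 0 < q x),
        q x * Real.log (q x / ((p x + q x) / 2))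
      = Real.log 2 + ∑ x ∈ Finset.univ.filter (fun x => 0 < q x),
        q x * Real.log (q x / (p x + q x)) := by
    have := JSD_aux q p hq_nonneg hq_sum hp_nonneg
    simpa [add_comm] using this
  set Sp := ∑ x ∈ Finset.univ.filter (fun x => 0 < p x),
      p x * Real.log (p x / (p x + q x)) with hSp
  set Sq := ∑ x ∈ Finset.univ.filter (fun x => 0 < q x),
      q x * Real.log (q x / (p x + q x)) with hSq
  have hJSD : JSD p q = Real.log 2 + (1 / 2) * (Sp + Sq) := by
    rw [JSD, h1, h2]; ring
  have hSp_nonpos : Sp ≤ 0 :=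
    Finset.sum_nonpos (JSD_aux_nonpos p q hp_nonneg hq_nonneg)
  have hSq_nonpos : Sq ≤ 0 := by
    apply Finset.sum_nonpos
    have := JSD_aux_nonpos q p hq_nonneg hp_nonneg
    intro x hx
    have := this x hx
    simpa [add_comm] using this
  constructor
  · intro hEq x
    have hsum0 : Sp + Sq = 0 := by
      rw [hJSD] at hEq
      linarith
    have hSp0 : Sp = 0 := by linarith
    have hSq0 : Sq = 0 := by linarith
    rcases eq_or_lt_of_le (hp_nonneg x) with hpx | hpx
    · rw [← hpx, zero_mul]
    rcases eq_or_lt_of_le (hq_nonneg x) with hqx | hqx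
    · rw [← hqx, mul_zero]
    -- both positive: derive contradiction from Sp = 0
    exfalso
    have hmem : x ∈ Finset.univ.filter (fun x => 0 < p x) := by
      simp [hpx]
    have hterm : p x * Real.log (p x / (p x + q x)) = 0 := by
      exact (Finset.sum_eq_zero_iff_of_nonpos
        (JSD_aux_nonpos p q hp_nonneg hq_nonneg)).mp hSp0 x hmem
    have hlog : Real.log (p x / (p x + q x)) = 0 := by
      rcases mul_eq_zero.mp hterm with h | h
      · exact absurd h (ne_of_gt hpx)
      · exact h
    have hpq : 0 < p x + q x := by linarith
    have hlt : p x / (p x + q x) < 1 := by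
      rw [div_lt_one hpq]; linarith
    have hgt : 0 < p x / (p x + q x) := div_pos hpx hpq
    have := Real.log_neg hgt hlt
    linarith [hlog ▸ this]
  · intro hdisj
    have hSp0 : Sp = 0 := by
      apply Finset.sum_eq_zero
      intro x hx
      have hpx : 0 < p x := by simpa using (Finset.mem_filter.mp hx).2
      have hqx : q x = 0 := by
        rcases mul_eq_zero.mp (hdisj x) with h | h
        · exact absurd h (ne_of_gt hpx)
        · exact h
      rw [hqx, add_zero, div_self (ne_of_gt hpx), Real.log_one, mul_zero]
    have hSq0 : Sq = 0 := by
      apply Finset.sum_eq_zero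
      intro x hx
      have hqx : 0 < q x := by simpa using (Finset.mem_filter.mp hx).2
      have hpx : p x = 0 := by
        rcases mul_eq_zero.mp (hdisj x) with h | h
        · exact h
        · exact absurd h (ne_of_gt hqx)
      rw [hpx, zero_add, div_self (ne_of_gt hqx), Real.log_one, mul_zero]
    rw [hJSD, hSp0, hSq0]
    ring
end

section
/- Let n, m be natural numbers and let v : Fin (m+1) → EuclideanSpace ℝ (Fin n). Let G : Matrix (Fin (m+1)) (Fin (m+1)) ℝ be the Gram matrix G i j = ⟪v i, v j⟫, and let G' : Matrix (Fin m) (Fin m) ℝ be the Gram matrix of the first m vectors, G' i j = ⟪v (Fin.castSucc i), v (Fin.castSucc j)⟫. Let S = Submodule.span ℝ { v (Fin.castSucc i) : i ∈ Fin m } and let d = Metric.infDist (v (Fin.last m)) S (the distance from the last vector to the span of the others). Then det G = d^2 * det G'. -/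
/-!
Subtracting from the last vector its orthogonal projection onto the span of the others changes
the family by a unitriangular matrix, so the Gram determinant is unchanged. Afterwards the last
vector is orthogonal to the others, so the Gram matrix is block diagonal and its determinant is
the squared norm of the new last vector, which is the distance to the span, times the Gram
determinant of the base.
-/

open Matrix
open scoped InnerProductSpace

theorem Matrix.det_one_sub_vecMulVec {R n : Type*} [CommRing R] [Fintype n] [DecidableEq n]
    (u v : n → R) : (1 - vecMulVec u v).det = 1 - v ⬝ᵥ u := by
  rw [vecMulVec_eq Unit, det_one_sub_mul_comm, det_unique]
  simp [replicateRow_mul_replicateCol_apply]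

theorem Matrix.det_eq_mul_det_submatrix_castSucc_of_castSucc_last_eq_zero {R : Type*}
    [CommRing R] {m : ℕ} (M : Matrix (Fin (m + 1)) (Fin (m + 1)) R)
    (h : ∀ i : Fin m, M i.castSucc (Fin.last m) = 0) :
    M.det = M (Fin.last m) (Fin.last m) * (M.submatrix Fin.castSucc Fin.castSucc).det := by
  rw [det_succ_column M (Fin.last m), Fin.sum_univ_castSucc]
  simp [h, Fin.succAbove_last, ← two_mul, pow_mul]

theorem Submodule.infDist_eq_norm_sub_starProjection {𝕜 E : Type*} [RCLike 𝕜]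
    [NormedAddCommGroup E] [InnerProductSpace 𝕜 E] (K : Submodule 𝕜 E)
    [K.HasOrthogonalProjection] (x : E) :
    Metric.infDist x K = ‖x - K.starProjection x‖ := by
  rw [Metric.infDist_eq_iInf, starProjection_minimal]
  simp [dist_eq_norm]

namespace Matrix

variable {𝕜 E : Type*} [RCLike 𝕜] [SeminormedAddCommGroup E] [InnerProductSpace 𝕜 E]

theorem gram_sum_smul {ι κ : Type*} [Fintype κ] (A : Matrix ι κ 𝕜) (v : κ → E) :
    gram 𝕜 (fun i => ∑ k, A i k • v k) = Aᴴᵀ * gram 𝕜 v * Aᵀ := by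
  ext i j
  simp only [gram_apply, mul_apply, transpose_apply, conjTranspose_apply, sum_inner, inner_sum,
    inner_smul_left, inner_smul_right, Finset.sum_mul, Finset.mul_sum, RCLike.star_def]
  exact Finset.sum_congr rfl fun k _ => Finset.sum_congr rfl fun l _ => by ring

theorem det_gram_sum_smul {ι : Type*} [Fintype ι] [DecidableEq ι] (A : Matrix ι ι 𝕜)
    (v : ι → E) :
    (gram 𝕜 fun i => ∑ k, A i k • v k).det = star A.det * A.det * (gram 𝕜 v).det := by
  rw [gram_sum_smul, det_mul, det_mul, det_transpose, det_transpose, det_conjTranspose]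
  ring

theorem det_gram_snoc_of_inner_eq_zero {m : ℕ} (u : Fin m → E) {y : E}
    (h : ∀ i, ⟪u i, y⟫_𝕜 = 0) :
    (gram 𝕜 (Fin.snoc u y : Fin (m + 1) → E)).det = ‖y‖ ^ 2 * (gram 𝕜 u).det := by
  have hbase : (gram 𝕜 (Fin.snoc u y : Fin (m + 1) → E)).submatrix Fin.castSucc Fin.castSucc =
      gram 𝕜 u := by
    ext; simp
  rw [det_eq_mul_det_submatrix_castSucc_of_castSucc_last_eq_zero _ (by simpa using h), hbase]
  simp [inner_self_eq_norm_sq_to_K]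

theorem det_gram_snoc_sub_of_mem_span {m : ℕ} (u : Fin m → E) (x : E) {p : E}
    (hp : p ∈ Submodule.span 𝕜 (Set.range u)) :
    (gram 𝕜 (Fin.snoc u (x - p) : Fin (m + 1) → E)).det =
      (gram 𝕜 (Fin.snoc u x : Fin (m + 1) → E)).det := by
  obtain ⟨c, rfl⟩ := (Submodule.mem_span_range_iff_exists_fun 𝕜).mp hp
  let w : Fin (m + 1) → E := Fin.snoc u x
  let A := 1 - vecMulVec (Pi.single (Fin.last m) 1) (Fin.snoc c 0 : Fin (m + 1) → 𝕜)
  have hA : A.det = 1 := by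
    simp [A, det_one_sub_vecMulVec]
  have hc : ∑ k, (Fin.snoc c 0 : Fin (m + 1) → 𝕜) k • w k = ∑ i, c i • u i := by
    simp [Fin.sum_univ_castSucc, w]
  have hw : (Fin.snoc u (x - ∑ i, c i • u i) : Fin (m + 1) → E) =
      fun i => ∑ k, A i k • w k := by
    funext i
    simp only [A, sub_apply, one_apply, vecMulVec_apply, sub_smul, ite_smul, one_smul, zero_smul,
      Finset.sum_sub_distrib, Finset.sum_ite_eq, Finset.mem_univ, if_true, mul_smul,
      ← Finset.smul_sum, hc]
    induction i using Fin.lastCases <;> simp [w]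
  rw [hw, det_gram_sum_smul, hA]
  simp [w]

end Matrix

/-- base-times-height recursion for Gram determinants: for
vectors `v 0, …, v m` in `ℝⁿ`, the Gram determinant of the whole family equals
the squared distance from the last vector to the span of the others times the
Gram determinant of the first `m` vectors. -/
theorem gram_det_eq_dist_sq_mul_gram_det
    (n m : ℕ) (v : Fin (m + 1) → EuclideanSpace ℝ (Fin n))
    (G : Matrix (Fin (m + 1)) (Fin (m + 1)) ℝ)
    (hG : ∀ i j, G i j = inner ℝ (v i) (v j))
    (G' : Matrix (Fin m) (Fin m) ℝ)
    (hG' : ∀ i j, G' i j = inner ℝ (v (Fin.castSucc i)) (v (Fin.castSucc j)))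
    (S : Submodule ℝ (EuclideanSpace ℝ (Fin n)))
    (hS : S = Submodule.span ℝ (Set.range fun i : Fin m => v (Fin.castSucc i)))
    (d : ℝ) (hd : d = Metric.infDist (v (Fin.last m)) (S : Set (EuclideanSpace ℝ (Fin n)))) :
    G.det = d ^ 2 * G'.det := by
  have hGv : G = gram ℝ v := Matrix.ext hG
  have hG'v : G' = gram ℝ (Fin.init v) := Matrix.ext hG'
  set p := S.starProjection (v (Fin.last m))
  have hp : p ∈ Submodule.span ℝ (Set.range (Fin.init v)) := hS ▸ S.starProjection_apply_mem _
  have horth (i : Fin m) : ⟪Fin.init v i, v (Fin.last m) - p⟫_ℝ = 0 :=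
    S.inner_right_of_mem_orthogonal (hS ▸ Submodule.subset_span ⟨i, rfl⟩)
      (S.sub_starProjection_mem_orthogonal _)
  calc G.det = (gram ℝ (Fin.snoc (Fin.init v) (v (Fin.last m)))).det := by
        rw [Fin.snoc_init_self, hGv]
    _ = (gram ℝ (Fin.snoc (Fin.init v) (v (Fin.last m) - p))).det :=
        (det_gram_snoc_sub_of_mem_span _ _ hp).symm
    _ = ‖v (Fin.last m) - p‖ ^ 2 * G'.det := by
        rw [det_gram_snoc_of_inner_eq_zero _ horth, hG'v]; rfl
    _ = d ^ 2 * G'.det := by rw [hd, S.infDist_eq_norm_sub_starProjection]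
end
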